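/- ∫_0^∞ ∫_0^∞ (2γ + log(xy)) / (1 + x + y)³ dx dy = γ, where γ is the Euler–Mascheroni constant. -/

import Mathlib

/-!
Integrating first in `x`: for `a > 0`,
`∫₀^∞ (c + log x) / (a + x)³ dx = (c + log a - 1) / (2 a²)`, so with `a = 1 + y` and
`c = 2γ + log y` the inner integral is `(2γ - 1 + log y + log (1 + y)) / (2 (1 + y)²)`,
and `∫₀^∞ (c + log y + log (1 + y) - 1) / (2 (1 + y)²) dy = c / 2`.
Both one-variable integrals are evaluated with explicit antiderivatives, which extend continuously
to `0` because `x log x → 0`; the integrands are dominated by a multiple of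
`(1 + |log x|) / (a + x)²`.
-/

open MeasureTheory Set Filter Real Topology

section Domination

variable {a : ℝ}

lemma integrableOn_Ioi_one_add_abs_log_div_add_sq (ha : 0 < a) :
    IntegrableOn (fun x => (1 + |log x|) / (a + x) ^ 2) (Ioi 0) := by
  rw [← Ioc_union_Ioi_eq_Ioi zero_le_one]
  refine IntegrableOn.union ?_ ?_
  · have hlog : IntegrableOn (fun x => 1 + |log x|) (Ioc (0 : ℝ) 1) :=
      (integrableOn_const measure_Ioc_lt_top.ne).add
        ((intervalIntegrable_iff_integrableOn_Ioc_of_le zero_le_one).1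
          intervalIntegral.intervalIntegrable_log').abs
    have hcont : ContinuousOn (fun x : ℝ => ((a + x) ^ 2)⁻¹) (Icc 0 1) :=
      ContinuousOn.inv₀ (by fun_prop) fun x hx => by have := hx.1; positivity
    simpa only [div_eq_mul_inv] using
      hlog.mul_continuousOn_of_subset hcont measurableSet_Ioc isCompact_Icc Ioc_subset_Icc_self
  · refine Integrable.mono' ((integrableOn_Ioi_rpow_of_lt (by norm_num : (-3 / 2 : ℝ) < -1)
      zero_lt_one).const_mul 3) (Measurable.aestronglyMeasurable (by fun_prop)) ?_
    filter_upwards [ae_restrict_mem measurableSet_Ioi] with x (hx : 1 < x)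
    have hx0 : 0 < x := by linarith
    have hsqrt : 1 ≤ x ^ (1 / 2 : ℝ) := one_le_rpow hx.le (by norm_num)
    have hlog : |log x| ≤ 2 * x ^ (1 / 2 : ℝ) := by
      rw [abs_of_nonneg (log_nonneg hx.le)]
      linarith [log_le_rpow_div hx0.le (by norm_num : (0 : ℝ) < 1 / 2)]
    have hpow : x ^ (-3 / 2 : ℝ) = x ^ (1 / 2 : ℝ) / x ^ 2 := by
      rw [← rpow_natCast, ← rpow_sub hx0]
      norm_num
    rw [norm_of_nonneg (by positivity), hpow]
    calc (1 + |log x|) / (a + x) ^ 2 ≤ 3 * x ^ (1 / 2 : ℝ) / x ^ 2 := by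
          gcongr
          · linarith
          · linarith
      _ = 3 * (x ^ (1 / 2 : ℝ) / x ^ 2) := by ring

lemma integrableOn_Ioi_of_abs_le_log_weight {f : ℝ → ℝ} (hf : Measurable f) (ha : 0 < a)
    {C : ℝ} (hbound : ∀ x > 0, |f x| ≤ C * ((1 + |log x|) / (a + x) ^ 2)) :
    IntegrableOn f (Ioi 0) :=
  Integrable.mono' ((integrableOn_Ioi_one_add_abs_log_div_add_sq ha).const_mul C)
    hf.aestronglyMeasurable (ae_restrict_of_forall_mem measurableSet_Ioi hbound)

lemma log_one_add_le_one_add_abs_log {y : ℝ} (hy : 0 < y) : log (1 + y) ≤ 1 + |log y| := by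
  have he : 2 ≤ exp 1 := by linarith [add_one_le_exp 1]
  have hy_le : y ≤ exp |log y| := (exp_log hy).symm.le.trans (exp_le_exp.2 (le_abs_self _))
  have hone_le : 1 ≤ exp |log y| := one_le_exp (abs_nonneg _)
  rw [log_le_iff_le_exp (by positivity), exp_add]
  nlinarith

end Domination

section InnerIntegral

noncomputable def innerAntideriv (a c x : ℝ) : ℝ :=
  x * log x * ((2 * a + x) / (2 * a ^ 2 * (a + x) ^ 2)) - log (a + x) / (2 * a ^ 2)
    + 1 / (2 * a * (a + x)) - c / (2 * (a + x) ^ 2)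

variable {a : ℝ} (c : ℝ)

lemma hasDerivAt_innerAntideriv (ha : 0 < a) {x : ℝ} (hx : 0 < x) :
    HasDerivAt (innerAntideriv a c) ((c + log x) / (a + x) ^ 3) x := by
  have hax : 0 < a + x := by positivity
  have hshift : HasDerivAt (fun t => a + t) 1 x := (hasDerivAt_id x).const_add a
  have hsq : HasDerivAt (fun t => (a + t) ^ 2) (2 * (a + x)) x := by
    simpa using hshift.fun_pow 2
  have h := ((((hasDerivAt_mul_log hx.ne').mul
    (((hasDerivAt_id x).const_add (2 * a)).div (hsq.const_mul (2 * a ^ 2))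
      (by dsimp; positivity))).sub ((hshift.log hax.ne').div_const (2 * a ^ 2))).add
    ((hasDerivAt_const x (1 : ℝ)).div (hshift.const_mul (2 * a)) (by dsimp; positivity))).sub
    ((hasDerivAt_const x c).div (hsq.const_mul 2) (by dsimp; positivity))
  refine HasDerivAt.congr_deriv (f := innerAntideriv a c) h ?_
  simp only [Pi.div_apply, id]
  field_simp
  ring

lemma continuousAt_innerAntideriv_zero (ha : 0 < a) : ContinuousAt (innerAntideriv a c) 0 := by
  have hmul_log : ContinuousAt (fun x : ℝ => x * log x) 0 := continuous_mul_log.continuousAt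
  unfold innerAntideriv
  fun_prop (disch := positivity)

lemma tendsto_innerAntideriv_atTop (ha : 0 < a) :
    Tendsto (innerAntideriv a c) atTop (𝓝 0) := by
  have hinv : Tendsto (fun x => 1 / (a + x)) atTop (𝓝 0) :=
    tendsto_const_nhds.div_atTop (tendsto_atTop_add_const_left _ a tendsto_id)
  have hlog_div : Tendsto (fun x => log x ^ 1 / (1 * x + a)) atTop (𝓝 0) :=
    tendsto_pow_log_div_mul_add_atTop 1 a 1 one_ne_zero
  have hlog_one_add : Tendsto (fun x => log (1 + a / x)) atTop (𝓝 0) := by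
    have h : Tendsto (fun x : ℝ => 1 + a / x) atTop (𝓝 (1 + 0)) :=
      tendsto_const_nhds.add (tendsto_const_nhds.div_atTop tendsto_id)
    rw [add_zero] at h
    simpa using h.log one_ne_zero
  have hlim := (((hlog_one_add.neg.div_const (2 * a ^ 2)).sub
    ((hlog_div.mul hinv).div_const 2)).add (hinv.div_const (2 * a))).sub
    ((hinv.pow 2).const_mul (c / 2))
  simp only [neg_zero, zero_div, mul_zero, sub_zero, add_zero, ne_eq, OfNat.ofNat_ne_zero,
    not_false_eq_true, zero_pow] at hlim
  refine hlim.congr' ?_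
  filter_upwards [eventually_gt_atTop 0] with x hx
  have hax : 0 < a + x := by positivity
  rw [show 1 + a / x = (a + x) / x by field_simp; ring, log_div hax.ne' hx.ne', innerAntideriv]
  field_simp
  ring

lemma integrableOn_log_add_div_add_pow_three (ha : 0 < a) :
    IntegrableOn (fun x => (c + log x) / (a + x) ^ 3) (Ioi 0) := by
  refine integrableOn_Ioi_of_abs_le_log_weight (by fun_prop) ha (C := (|c| + 1) / a)
    fun x hx => ?_
  have hax : a ≤ a + x := by linarith
  have hnum : |c + log x| ≤ (|c| + 1) * (1 + |log x|) := by
    nlinarith [abs_add_le c (log x), abs_nonneg c, abs_nonneg (log x)]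
  rw [abs_div, abs_of_pos (by positivity : 0 < (a + x) ^ 3)]
  calc |c + log x| / (a + x) ^ 3 ≤ (|c| + 1) * (1 + |log x|) / (a * (a + x) ^ 2) := by
        rw [pow_succ']
        gcongr
    _ = (|c| + 1) / a * ((1 + |log x|) / (a + x) ^ 2) := by field_simp

theorem integral_Ioi_log_add_div_add_pow_three (ha : 0 < a) :
    ∫ x in Ioi 0, (c + log x) / (a + x) ^ 3 = (c + log a - 1) / (2 * a ^ 2) := by
  rw [integral_Ioi_of_hasDerivAt_of_tendsto
    (continuousAt_innerAntideriv_zero c ha).continuousWithinAt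
    (fun x hx => hasDerivAt_innerAntideriv c ha hx)
    (integrableOn_log_add_div_add_pow_three c ha) (tendsto_innerAntideriv_atTop c ha)]
  simp only [innerAntideriv, log_zero, mul_zero, zero_mul, add_zero]
  field_simp
  ring

end InnerIntegral

section OuterIntegral

noncomputable def outerAntideriv (c y : ℝ) : ℝ :=
  y * log y / (2 * (1 + y)) - log (1 + y) / 2 - (c + log (1 + y)) / (2 * (1 + y))

variable (c : ℝ)

lemma hasDerivAt_outerAntideriv {y : ℝ} (hy : 0 < y) :
    HasDerivAt (outerAntideriv c) ((c + log y + log (1 + y) - 1) / (2 * (1 + y) ^ 2)) y := by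
  have hy1 : 0 < 1 + y := by positivity
  have hshift : HasDerivAt (fun t => 1 + t) 1 y := (hasDerivAt_id y).const_add 1
  have hlog : HasDerivAt (fun t => log (1 + t)) (1 / (1 + y)) y := by
    simpa using hshift.log hy1.ne'
  have h := (((hasDerivAt_mul_log hy.ne').div (hshift.const_mul 2) (by dsimp; positivity)).sub
    (hlog.div_const 2)).sub (((hasDerivAt_const y c).add hlog).div (hshift.const_mul 2)
      (by dsimp; positivity))
  refine HasDerivAt.congr_deriv (f := outerAntideriv c) h ?_
  simp only [Pi.add_apply]
  field_simp
  ring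

lemma continuousAt_outerAntideriv_zero : ContinuousAt (outerAntideriv c) 0 := by
  have hmul_log : ContinuousAt (fun y : ℝ => y * log y) 0 := continuous_mul_log.continuousAt
  unfold outerAntideriv
  fun_prop (disch := positivity)

lemma tendsto_outerAntideriv_atTop : Tendsto (outerAntideriv c) atTop (𝓝 0) := by
  have htop : Tendsto (fun y : ℝ => 1 + y) atTop atTop :=
    tendsto_atTop_add_const_left _ 1 tendsto_id
  have hinv : Tendsto (fun y : ℝ => 1 / (1 + y)) atTop (𝓝 0) := tendsto_const_nhds.div_atTop htop
  have hlog_div : Tendsto (fun y => log (1 + y) / (1 + y)) atTop (𝓝 0) :=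
    isLittleO_log_id_atTop.tendsto_div_nhds_zero.comp htop
  have hmul_log : Tendsto (fun y => y * log (1 + 1 / y)) atTop (𝓝 1) :=
    tendsto_mul_log_one_add_div_atTop 1
  have hlim := (((hmul_log.mul hinv).div_const 2).neg.sub hlog_div).sub (hinv.const_mul (c / 2))
  simp only [mul_zero, zero_div, neg_zero, sub_zero] at hlim
  refine hlim.congr' ?_
  filter_upwards [eventually_gt_atTop 0] with y hy
  have hy1 : 0 < 1 + y := by positivity
  rw [show 1 + 1 / y = (1 + y) / y by field_simp; ring, log_div hy1.ne' hy.ne', outerAntideriv]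
  field_simp
  ring

lemma integrableOn_log_add_log_one_add_div_sq :
    IntegrableOn (fun y => (c + log y + log (1 + y) - 1) / (2 * (1 + y) ^ 2)) (Ioi 0) := by
  refine integrableOn_Ioi_of_abs_le_log_weight (by fun_prop) one_pos (C := |c - 1| + 2)
    fun y hy => ?_
  have hlog1 : |log (1 + y)| ≤ 1 + |log y| := by
    rw [abs_of_nonneg (log_nonneg (by linarith))]
    exact log_one_add_le_one_add_abs_log hy
  have hnum : |c + log y + log (1 + y) - 1| ≤ (|c - 1| + 2) * (1 + |log y|) := by
    have := abs_add_le (c - 1 + log y) (log (1 + y))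
    have := abs_add_le (c - 1) (log y)
    rw [show c + log y + log (1 + y) - 1 = c - 1 + log y + log (1 + y) by ring]
    nlinarith [abs_nonneg (c - 1), abs_nonneg (log y)]
  rw [abs_div, abs_of_pos (by positivity : (0 : ℝ) < 2 * (1 + y) ^ 2)]
  calc |c + log y + log (1 + y) - 1| / (2 * (1 + y) ^ 2)
      ≤ (|c - 1| + 2) * (1 + |log y|) / (1 * (1 + y) ^ 2) := by gcongr; norm_num
    _ = (|c - 1| + 2) * ((1 + |log y|) / (1 + y) ^ 2) := by ring

theorem integral_Ioi_log_add_log_one_add_div_sq :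
    ∫ y in Ioi 0, (c + log y + log (1 + y) - 1) / (2 * (1 + y) ^ 2) = c / 2 := by
  rw [integral_Ioi_of_hasDerivAt_of_tendsto
    (continuousAt_outerAntideriv_zero c).continuousWithinAt
    (fun y hy => hasDerivAt_outerAntideriv c hy) (integrableOn_log_add_log_one_add_div_sq c)
    (tendsto_outerAntideriv_atTop c)]
  simp [outerAntideriv]

end OuterIntegral

theorem integral_Ioi_integral_Ioi_add_log_mul_div_cube (c : ℝ) :
    ∫ y in Ioi 0, ∫ x in Ioi 0, (c + log (x * y)) / (1 + x + y) ^ 3 = c / 2 := by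
  calc _ = ∫ y in Ioi 0, (c + log y + log (1 + y) - 1) / (2 * (1 + y) ^ 2) := by
        refine setIntegral_congr_fun measurableSet_Ioi fun y (hy : 0 < y) => ?_
        calc ∫ x in Ioi 0, (c + log (x * y)) / (1 + x + y) ^ 3
            = ∫ x in Ioi 0, (c + log y + log x) / (1 + y + x) ^ 3 :=
              setIntegral_congr_fun measurableSet_Ioi fun x (hx : 0 < x) => by
                rw [log_mul hx.ne' hy.ne']
                ring_nf
          _ = _ := integral_Ioi_log_add_div_add_pow_three _ (by positivity)
    _ = c / 2 := integral_Ioi_log_add_log_one_add_div_sq c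

theorem double_integral_log_cube :
    ∫ y : ℝ in Ioi 0, ∫ x : ℝ in Ioi 0,
        (2 * Real.eulerMascheroniConstant + Real.log (x * y)) / (1 + x + y) ^ (3 : ℕ)
      = Real.eulerMascheroniConstant := by
  rw [integral_Ioi_integral_Ioi_add_log_mul_div_cube]
  ring
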